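/- In the no-cost, no-transfer setting, fairness is not guaranteed under incentive compatibility: there exist a market and true preferences μ (namely Example 1 with N = L = 3) together with an incentive-compatible matching policy M (choosing at each step t a matching stable under ν_t, e.g., the provider-proposing Gale–Shapley matching) such that the optimal regret of every provider satisfies R̄(p;M) = O(log T) while the optimal regret of some user satisfies R̄(u;M) = Ω(T). -/

import Mathlib

open MeasureTheory ProbabilityTheory

namespace MatchingBandits

abbrev Agent (N L : ℕ) := Sum (Fin N) (Fin L)

structure Matching (N L : ℕ) where
  (toFun : Agent N L → Option (Agent N L))
  (user_matches_provider : ∀ (u : Fin N) (a : Agent N L),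
    toFun (Sum.inl u) = some a → ∃ p : Fin L, a = Sum.inr p)
  (provider_matched : ∀ p : Fin L, ∃ u : Fin N, toFun (Sum.inr p) = some (Sum.inl u))
  (mutual_match : ∀ a a' : Agent N L, toFun a = some a' ↔ toFun a' = some a)

def IsStable {N L : ℕ} (V : Agent N L → Option (Agent N L) → ℝ)
    (M : Matching N L) : Prop :=
  ¬ ∃ (u : Fin N) (p : Fin L),
      V (Sum.inl u) (M.toFun (Sum.inl u)) < V (Sum.inl u) (some (Sum.inr p)) ∧
      V (Sum.inr p) (M.toFun (Sum.inr p)) < V (Sum.inr p) (some (Sum.inl u))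

def OppositeOpt {N L : ℕ} : Agent N L → Option (Agent N L) → Prop
  | _, none => True
  | Sum.inl _, some (Sum.inr _) => True
  | Sum.inr _, some (Sum.inl _) => True
  | _, _ => False

/-- The stochastic data of a two-sided matching market with bandit learners:
true preferences `μpref` (with `μpref a ∅ = 0`), time-indexed rewards
`X a b t` (the reward agent `a` would receive if matched with `b` at time step `t`),
initial samples `X0 a b n` for `n < T0 a b`, all mutually independent, each
`σ²`-sub-Gaussian with mean `μpref a (some b)`, together with a UCB parameter `α > 2`. -/
structure BanditMarket (N L : ℕ) where
  (Ω : Type)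
  [mΩ : MeasurableSpace Ω]
  (P : Measure Ω)
  (probMeas : IsProbabilityMeasure P)
  (σ α : ℝ)
  (σpos : 0 < σ)
  (αgt : 2 < α)
  (μpref : Agent N L → Option (Agent N L) → ℝ)
  (μnone : ∀ a, μpref a none = 0)
  (X X0 : Agent N L → Agent N L → ℕ → Ω → ℝ)
  (T0 : Agent N L → Agent N L → ℕ)
  (T0pos : ∀ a b, 0 < T0 a b)
  (T0symm : ∀ a b, T0 a b = T0 b a)
  (Xmeas : ∀ a b t, Measurable (X a b t))
  (X0meas : ∀ a b n, Measurable (X0 a b n))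
  (Xint : ∀ a b t, Integrable (X a b t) P)
  (Xmean : ∀ a b t, ∫ ω, X a b t ω ∂P = μpref a (some b))
  (Xsubg : ∀ a b t s, ∫ ω, Real.exp (s * (X a b t ω - μpref a (some b))) ∂P
      ≤ Real.exp (σ^2 * s^2 / 2))
  (X0subg : ∀ a b n s, ∫ ω, Real.exp (s * (X0 a b n ω - μpref a (some b))) ∂P
      ≤ Real.exp (σ^2 * s^2 / 2))
  (indep : iIndepFun
      (Sum.elim (fun q : Agent N L × Agent N L × ℕ => X q.1 q.2.1 q.2.2)
                (fun q : Agent N L × Agent N L × ℕ => X0 q.1 q.2.1 q.2.2)) P)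
  (identX : ∀ a b t t', IdentDistrib (X a b t) (X a b t') P P)
  (identX0 : ∀ a b t n, IdentDistrib (X a b t) (X0 a b n) P P)

attribute [instance] BanditMarket.mΩ BanditMarket.probMeas

variable {N L : ℕ}

/-- `T_t(a,b)`: the number of samples agent `a` has of agent `b` up to and including
time step `t`, given the realized history of matchings. -/
def histCount (S : BanditMarket N L) (Mt : ℕ → S.Ω → Matching N L)
    (a b : Agent N L) (t : ℕ) (ω : S.Ω) : ℕ :=
  S.T0 a b + ((Finset.Icc 1 t).filter (fun τ => (Mt τ ω).toFun a = some b)).card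

/-- The transient preferences (UCB indices) `ν_t(a, ·)` at time step `t ≥ 1`. -/
noncomputable def nu (S : BanditMarket N L) (Mt : ℕ → S.Ω → Matching N L)
    (t : ℕ) (ω : S.Ω) (a : Agent N L) : Option (Agent N L) → ℝ
  | none => 0
  | some b =>
      ((∑ τ ∈ Finset.Icc 1 (t-1), if (Mt τ ω).toFun a = some b then S.X a b τ ω else 0)
          + ∑ n ∈ Finset.range (S.T0 a b), S.X0 a b n ω)
        / (histCount S Mt a b (t-1) ω : ℝ)
      + Real.sqrt (2 * S.σ^2 * S.α * Real.log (t : ℝ) / (histCount S Mt a b (t-1) ω : ℝ))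

/-- The stochastic reward `X_t(a, b)` received by agent `a` when assigned `b ∈ A⁺`
at time step `t`; being unmatched gives reward `0`. -/
noncomputable def rew (S : BanditMarket N L) (a : Agent N L) :
    Option (Agent N L) → ℕ → S.Ω → ℝ
  | none, _, _ => 0
  | some b, t, ω => S.X a b t ω

/-- `Δ_min`: the minimum preference gap. -/
noncomputable def Δmin (μpref : Agent N L → Option (Agent N L) → ℝ) : ℝ :=
  sInf {x : ℝ | ∃ (a : Agent N L) (b₂ b₃ : Option (Agent N L)),
    OppositeOpt a b₂ ∧ OppositeOpt a b₃ ∧ b₂ ≠ b₃ ∧ x = |μpref a b₂ - μpref a b₃|}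

/-- `Δ_max(a)`: the maximum preference gap of agent `a`. -/
noncomputable def Δmax (μpref : Agent N L → Option (Agent N L) → ℝ) (a : Agent N L) : ℝ :=
  sSup {x : ℝ | ∃ (b₁ b₂ : Option (Agent N L)),
    OppositeOpt a b₁ ∧ OppositeOpt a b₂ ∧ x = μpref a b₁ - μpref a b₂}

/-- No ties in preferences. -/
def TieFree (μpref : Agent N L → Option (Agent N L) → ℝ) : Prop :=
  ∀ (a : Agent N L) (b b' : Option (Agent N L)),
    OppositeOpt a b → OppositeOpt a b' → b ≠ b' → μpref a b ≠ μpref a b'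

/-- A family of (optimal-)regret values `R a T` is unfair if some agent's regret is
`O(log T)` while another's is `ω(log T)`. -/
def IsUnfair (R : Agent N L → ℕ → ℝ) : Prop :=
  ∃ a a' : Agent N L, a ≠ a' ∧
    (∃ C : ℝ, ∀ᶠ T : ℕ in Filter.atTop, R a T ≤ C * Real.log (T : ℝ)) ∧
    (∀ C : ℝ, ∀ᶠ T : ℕ in Filter.atTop, C * Real.log (T : ℝ) ≤ R a' T)


/-- The ordinal preference profile of Example 1 (`N = L = 3`):
`p₁: u₁ ≻ u₂ ≻ u₃`, `p₂: u₁ ≻ u₂ ≻ u₃`, `p₃: u₃ ≻ u₂ ≻ u₁`,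
`u₁: p₃ ≻ p₂ ≻ p₁`, `u₂: p₃ ≻ p₁ ≻ p₂`, `u₃: p₁ ≻ p₂ ≻ p₃`
(users are `Sum.inl 0, Sum.inl 1, Sum.inl 2`; providers are `Sum.inr 0, Sum.inr 1, Sum.inr 2`). -/
def ExampleOnePrefs (μ : Agent 3 3 → Option (Agent 3 3) → ℝ) : Prop :=
  μ (Sum.inr 0) (some (Sum.inl 1)) < μ (Sum.inr 0) (some (Sum.inl 0)) ∧
  μ (Sum.inr 0) (some (Sum.inl 2)) < μ (Sum.inr 0) (some (Sum.inl 1)) ∧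
  μ (Sum.inr 1) (some (Sum.inl 1)) < μ (Sum.inr 1) (some (Sum.inl 0)) ∧
  μ (Sum.inr 1) (some (Sum.inl 2)) < μ (Sum.inr 1) (some (Sum.inl 1)) ∧
  μ (Sum.inr 2) (some (Sum.inl 1)) < μ (Sum.inr 2) (some (Sum.inl 2)) ∧
  μ (Sum.inr 2) (some (Sum.inl 0)) < μ (Sum.inr 2) (some (Sum.inl 1)) ∧
  μ (Sum.inl 0) (some (Sum.inr 1)) < μ (Sum.inl 0) (some (Sum.inr 2)) ∧
  μ (Sum.inl 0) (some (Sum.inr 0)) < μ (Sum.inl 0) (some (Sum.inr 1)) ∧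
  μ (Sum.inl 1) (some (Sum.inr 0)) < μ (Sum.inl 1) (some (Sum.inr 2)) ∧
  μ (Sum.inl 1) (some (Sum.inr 1)) < μ (Sum.inl 1) (some (Sum.inr 0)) ∧
  μ (Sum.inl 2) (some (Sum.inr 1)) < μ (Sum.inl 2) (some (Sum.inr 0)) ∧
  μ (Sum.inl 2) (some (Sum.inr 2)) < μ (Sum.inl 2) (some (Sum.inr 1))

/-! ### Auxiliary construction for the unfairness example -/

section UnfairnessConstruction

/-! #### Constants -/

noncomputable def b8 : ℝ := Real.sqrt (6 * Real.log 8)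
noncomputable def b9 : ℝ := Real.sqrt (6 * Real.log 9)
noncomputable def b25 : ℝ := Real.sqrt (6 * Real.log 25)
noncomputable def Gv : ℝ := b25 + 1
noncomputable def dv : ℝ := b25 - b9

lemma log8_ge_two : (2:ℝ) ≤ Real.log 8 := by
  rw [Real.le_log_iff_exp_le (by norm_num)]
  have h := Real.exp_one_lt_d9
  calc Real.exp 2 = Real.exp 1 * Real.exp 1 := by rw [← Real.exp_add]; norm_num
    _ ≤ 2.7182818286 * 2.7182818286 := by nlinarith [Real.exp_pos 1]
    _ ≤ 8 := by norm_num

lemma b8_pos : 0 < b8 := Real.sqrt_pos.2 (by nlinarith [log8_ge_two])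
lemma b8_le_b9 : b8 ≤ b9 := by
  apply Real.sqrt_le_sqrt
  have : Real.log 8 ≤ Real.log 9 := Real.log_le_log (by norm_num) (by norm_num)
  linarith
lemma b9_lt_b25 : b9 < b25 := by
  apply Real.sqrt_lt_sqrt (by positivity)
  have : Real.log 9 < Real.log 25 := Real.log_lt_log (by norm_num) (by norm_num)
  linarith
lemma b9_pos : 0 < b9 := lt_of_lt_of_le b8_pos b8_le_b9
lemma b25_pos : 0 < b25 := lt_trans b9_pos b9_lt_b25
lemma b25_lt_Gv : b25 < Gv := by rw [Gv]; linarith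
lemma dv_pos : 0 < dv := by rw [dv]; linarith [b9_lt_b25]
lemma dv_add : dv + b9 = b25 := by rw [dv]; ring
lemma dv_lt_Gv : dv < Gv := by rw [dv, Gv]; linarith [b9_pos]
lemma Gv_pos : 0 < Gv := lt_trans b25_pos b25_lt_Gv
lemma b8_lt_Gv : b8 < Gv := lt_of_le_of_lt b8_le_b9 (lt_trans b9_lt_b25 b25_lt_Gv)
lemma b9_lt_Gv : b9 < Gv := lt_trans b9_lt_b25 b25_lt_Gv

/-! #### Fin 3 literal normalization -/

lemma fin3_mk0 (h : (0:ℕ) < 3) : (⟨0, h⟩ : Fin 3) = 0 := rfl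
lemma fin3_mk1 (h : (1:ℕ) < 3) : (⟨1, h⟩ : Fin 3) = 1 := rfl
lemma fin3_mk2 (h : (2:ℕ) < 3) : (⟨2, h⟩ : Fin 3) = 2 := rfl

/-! #### Preference values -/

/-- `uVal i j` : value of provider `j` to user `i`. -/
noncomputable def uVal : Fin 3 → Fin 3 → ℝ :=
  ![![1, 1+Gv, 1+2*Gv], ![1+Gv, 1, 1+2*Gv], ![1+2*Gv, 1+Gv, 1]]
/-- `pVal j i` : value of user `i` to provider `j`. -/
noncomputable def pVal : Fin 3 → Fin 3 → ℝ :=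
  ![![1+2*Gv, 1+Gv, 1], ![1+Gv+b8/4, 1+Gv, 1], ![1, 1+dv, 1+dv+Gv]]

noncomputable def μEx : Agent 3 3 → Option (Agent 3 3) → ℝ := fun a b =>
  match a, b with
  | Sum.inl i, some (Sum.inr j) => uVal i j
  | Sum.inr j, some (Sum.inl i) => pVal j i
  | _, _ => 0

lemma μEx_user (i j : Fin 3) : μEx (Sum.inl i) (some (Sum.inr j)) = uVal i j := rfl
lemma μEx_prov (j i : Fin 3) : μEx (Sum.inr j) (some (Sum.inl i)) = pVal j i := rfl

/-! #### The four matchings -/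

def MP : Matching 3 3 where
  toFun := Sum.elim (fun i => some (Sum.inr (![1,0,2] i))) (fun j => some (Sum.inl (![1,0,2] j)))
  user_matches_provider := by decide
  provider_matched := by decide
  mutual_match := by decide

def MI : Matching 3 3 where
  toFun := Sum.elim (fun i => some (Sum.inr (![0,1,2] i))) (fun j => some (Sum.inl (![0,1,2] j)))
  user_matches_provider := by decide
  provider_matched := by decide
  mutual_match := by decide

def MU : Matching 3 3 where
  toFun := Sum.elim (fun i => some (Sum.inr (![1,2,0] i))) (fun j => some (Sum.inl (![2,0,1] j)))
  user_matches_provider := by decide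
  provider_matched := by decide
  mutual_match := by decide

def MA : Matching 3 3 where
  toFun := Sum.elim (fun i => some (Sum.inr (![2,0,1] i))) (fun j => some (Sum.inl (![1,2,0] j)))
  user_matches_provider := by decide
  provider_matched := by decide
  mutual_match := by decide

/-! #### Powers and the schedule -/

def IsPow (b t : ℕ) : Prop := b ≤ t ∧ b ^ (Nat.log b t) = t

instance (b t : ℕ) : Decidable (IsPow b t) := instDecidableAnd

lemma isPow_iff {b t : ℕ} (hb : 1 < b) : IsPow b t ↔ ∃ k, 1 ≤ k ∧ t = b ^ k := by
  constructor
  · rintro ⟨h1, h2⟩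
    exact ⟨Nat.log b t, Nat.log_pos hb h1, h2.symm⟩
  · rintro ⟨k, hk, rfl⟩
    exact ⟨Nat.le_self_pow (by omega) b, by rw [Nat.log_pow hb]⟩

/-- The schedule: explore `MI` at powers of 8, `MU` at powers of 9, `MA` at powers of 25,
and otherwise play the (stable, provider-optimal) matching `MP`. -/
def sched (t : ℕ) : Matching 3 3 :=
  if IsPow 8 t then MI else if IsPow 9 t then MU else if IsPow 25 t then MA else MP

lemma not89 {t : ℕ} (h : IsPow 8 t) : ¬ IsPow 9 t := by
  rcases (isPow_iff (by norm_num)).1 h with ⟨k, hk, rfl⟩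
  rintro h9
  rcases (isPow_iff (by norm_num)).1 h9 with ⟨j, hj, hje⟩
  have h2 : 2 ∣ 8 ^ k := dvd_pow (by norm_num) (by omega)
  rw [hje] at h2
  have := Nat.Prime.dvd_of_dvd_pow (p := 2) (by norm_num) h2
  omega

lemma not825 {t : ℕ} (h : IsPow 8 t) : ¬ IsPow 25 t := by
  rcases (isPow_iff (by norm_num)).1 h with ⟨k, hk, rfl⟩
  rintro h9
  rcases (isPow_iff (by norm_num)).1 h9 with ⟨j, hj, hje⟩
  have h2 : 2 ∣ 8 ^ k := dvd_pow (by norm_num) (by omega)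
  rw [hje] at h2
  have := Nat.Prime.dvd_of_dvd_pow (p := 2) (by norm_num) h2
  omega

lemma not925 {t : ℕ} (h : IsPow 9 t) : ¬ IsPow 25 t := by
  rcases (isPow_iff (by norm_num)).1 h with ⟨k, hk, rfl⟩
  rintro h9
  rcases (isPow_iff (by norm_num)).1 h9 with ⟨j, hj, hje⟩
  have h2 : 3 ∣ 9 ^ k := dvd_pow (by norm_num) (by omega)
  rw [hje] at h2
  have := Nat.Prime.dvd_of_dvd_pow (p := 3) (by norm_num) h2
  omega

lemma sched_pow8 {t : ℕ} (h : IsPow 8 t) : sched t = MI := if_pos h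
lemma sched_pow9 {t : ℕ} (h : IsPow 9 t) : sched t = MU := by
  rw [sched, if_neg (fun h8 => not89 h8 h), if_pos h]
lemma sched_pow25 {t : ℕ} (h : IsPow 25 t) : sched t = MA := by
  rw [sched, if_neg (fun h8 => not825 h8 h), if_neg (fun h9 => not925 h9 h), if_pos h]
lemma sched_mp {t : ℕ} (h8 : ¬ IsPow 8 t) (h9 : ¬ IsPow 9 t) (h25 : ¬ IsPow 25 t) :
    sched t = MP := by rw [sched, if_neg h8, if_neg h9, if_neg h25]

/-! #### counting lemmas -/

lemma card_pow_filter {b : ℕ} (hb : 2 ≤ b) (m : ℕ) :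
    ((Finset.Icc 1 m).filter (fun τ => IsPow b τ)).card = Nat.log b m := by
  have hb1 : 1 < b := hb
  have himg : (Finset.Icc 1 m).filter (fun τ => IsPow b τ)
      = (Finset.Icc 1 (Nat.log b m)).image (b ^ ·) := by
    ext τ
    simp only [Finset.mem_filter, Finset.mem_Icc, Finset.mem_image]
    constructor
    · rintro ⟨⟨h1, h2⟩, hp⟩
      rcases (isPow_iff hb1).1 hp with ⟨k, hk, rfl⟩
      have hm0 : m ≠ 0 := by
        have : 1 ≤ b ^ k := Nat.one_le_pow _ _ (by omega)
        omega
      exact ⟨k, ⟨hk, (Nat.le_log_iff_pow_le hb1 hm0).2 h2⟩, rfl⟩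
    · rintro ⟨k, ⟨hk1, hk2⟩, rfl⟩
      have hm0 : m ≠ 0 := by
        intro h; rw [h] at hk2; simp [Nat.log_zero_right] at hk2; omega
      refine ⟨⟨Nat.one_le_pow _ _ (by omega), (Nat.le_log_iff_pow_le hb1 hm0).1 hk2⟩,
        (isPow_iff hb1).2 ⟨k, hk1, rfl⟩⟩
  rw [himg, Finset.card_image_of_injective _ (Nat.pow_right_injective hb), Nat.card_Icc]
  omega

lemma log_le_quarter {b m : ℕ} (hb : 4 ≤ b) : 4 * Nat.log b m ≤ m := by
  set L := Nat.log b m with hL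
  rcases Nat.eq_zero_or_pos L with h | h
  · omega
  · have hm0 : m ≠ 0 := by
      intro hm; rw [hm] at hL; simp [Nat.log_zero_right] at hL; omega
    have h1 : b ^ L ≤ m := Nat.pow_log_le_self b hm0
    have h2 : 4 * L ≤ 4 ^ L := by
      clear hL h1 hm0
      induction L with
      | zero => omega
      | succ n ih =>
        rcases Nat.eq_zero_or_pos n with h | h
        · subst h; norm_num
        · have := ih
          have h4 : 4 ^ n ≥ 4 := by
            calc 4 ^ n ≥ 4 ^ 1 := Nat.pow_le_pow_right (by norm_num) h
              _ = 4 := by norm_num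
          calc 4 * (n + 1) = 4 * n + 4 := by ring
            _ ≤ 4 ^ n + 4 ^ n := by omega
            _ ≤ 4 ^ (n+1) := by rw [pow_succ]; omega
    have h3 : (4:ℕ) ^ L ≤ b ^ L := Nat.pow_le_pow_left hb L
    omega

/-! #### analytic bounds -/

lemma log_le_two_sqrt {x : ℝ} (hx : 0 < x) : Real.log x ≤ 2 * (Real.sqrt x - 1) := by
  have h1 : Real.log x = 2 * Real.log (Real.sqrt x) := by
    rw [Real.log_sqrt hx.le]; ring
  have h2 : Real.log (Real.sqrt x) ≤ Real.sqrt x - 1 :=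
    Real.log_le_sub_one_of_pos (Real.sqrt_pos.2 hx)
  linarith

lemma cap_bound {b t : ℕ} (hb : 2 ≤ b) (ht : 1 ≤ t) :
    Real.sqrt (6 * Real.log t / (1 + Nat.log b (t-1) : ℕ)) ≤ Real.sqrt (6 * Real.log b) := by
  apply Real.sqrt_le_sqrt
  set L := Nat.log b (t-1) with hL
  have hpow : t ≤ b ^ (L + 1) := by
    have := Nat.lt_pow_succ_log_self (show 1 < b by omega) (t-1)
    simp only [Nat.succ_eq_add_one] at this
    rw [← hL] at this
    omega
  have hlog : Real.log t ≤ (L+1 : ℝ) * Real.log b := by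
    calc Real.log t ≤ Real.log (b ^ (L+1) : ℕ) :=
          Real.log_le_log (by exact_mod_cast ht) (by exact_mod_cast hpow)
      _ = (L+1 : ℝ) * Real.log b := by
          push_cast
          rw [Real.log_pow]
          push_cast; ring
  have hL1 : (0:ℝ) < (1 + L : ℕ) := by positivity
  rw [div_le_iff₀ hL1]
  have hlb : 0 ≤ Real.log b := Real.log_nonneg (by exact_mod_cast hb.trans' (by norm_num))
  push_cast
  push_cast at hlog
  nlinarith

lemma plateau {b k : ℕ} (hb : 2 ≤ b) (hk : 1 ≤ k) :
    Real.sqrt (6 * Real.log ((b ^ k : ℕ)) / (1 + Nat.log b ((b:ℕ) ^ k - 1) : ℕ)) =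
      Real.sqrt (6 * Real.log b) := by
  have hlp : Nat.log b ((b:ℕ) ^ k - 1) = k - 1 := by
    apply Nat.log_eq_of_pow_le_of_lt_pow
    · have h1 : b ^ (k-1) * 2 ≤ b ^ (k-1) * b := Nat.mul_le_mul_left _ hb
      have h2 : b ^ (k-1) * b = b ^ k := by rw [← pow_succ]; congr 1; omega
      have h3 : 1 ≤ b ^ (k-1) := Nat.one_le_pow _ _ (by omega)
      omega
    · have h0 : 1 ≤ b ^ k := Nat.one_le_pow _ _ (by omega)
      calc b ^ k - 1 < b ^ k := by omega
        _ ≤ b ^ (k - 1 + 1) := by rw [show k - 1 + 1 = k by omega]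
  rw [hlp]
  congr 1
  have hk0 : (1 + (k-1) : ℕ) = (k:ℕ) := by omega
  rw [hk0]
  have hlogp : Real.log ((b:ℕ) ^ k : ℕ) = (k:ℝ) * Real.log b := by
    push_cast
    rw [Real.log_pow]
  rw [hlogp]
  have hkR : (k:ℝ) ≠ 0 := by positivity
  field_simp

lemma bP_bound {t c : ℕ} (ht : 1 ≤ t) (hc : (t:ℝ) - 1 + 200 ≤ 2 * c) :
    Real.sqrt (6 * Real.log t / (c : ℝ)) ≤ b8 / 2 := by
  have htR : (1:ℝ) ≤ (t:ℝ) := by exact_mod_cast ht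
  have h2 : b8 / 2 = Real.sqrt (6 * Real.log 8 / 4) := by
    rw [b8, Real.sqrt_div (by positivity) 4,
      show (4:ℝ) = 2^2 by norm_num, Real.sqrt_sq (by norm_num)]
  rw [h2]
  apply Real.sqrt_le_sqrt
  have hc0 : (0:ℝ) < (c : ℝ) := by nlinarith
  rw [div_le_div_iff₀ hc0 (by norm_num)]
  have hlog : Real.log t ≤ 2 * (Real.sqrt t - 1) := log_le_two_sqrt (by positivity)
  have hst : Real.sqrt t ^ 2 = (t:ℝ) := Real.sq_sqrt (by positivity)
  have hsq : (Real.sqrt t - 4)^2 ≥ 0 := sq_nonneg _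
  have key : 2 * Real.log t ≤ (c:ℝ) := by nlinarith
  have hln : 0 ≤ Real.log t := Real.log_nonneg htR
  nlinarith [log8_ge_two]

/-! #### The market -/

noncomputable def T0f : Agent 3 3 → Agent 3 3 → ℕ := fun a b =>
  match a, b with
  | Sum.inl i, Sum.inr j =>
      if (i = 0 ∧ j = 1) ∨ (i = 1 ∧ j = 0) ∨ (i = 2 ∧ j = 2) then 100 else 1
  | Sum.inr j, Sum.inl i =>
      if (i = 0 ∧ j = 1) ∨ (i = 1 ∧ j = 0) ∨ (i = 2 ∧ j = 2) then 100 else 1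
  | _, _ => 1

lemma iIndepFun_dirac {ι : Type} (F : ι → Unit → ℝ) :
    iIndepFun F (MeasureTheory.Measure.dirac ()) := by
  rw [iIndepFun_iff_measure_inter_preimage_eq_mul]
  intro s sets _
  by_cases h : ∀ i ∈ s, F i () ∈ sets i
  · have h1 : (⋂ i ∈ s, F i ⁻¹' sets i) = Set.univ := by
      ext ω
      simp only [Set.mem_iInter, Set.mem_preimage, Set.mem_univ, iff_true]
      intro i hi
      cases ω
      exact h i hi
    rw [h1, measure_univ]
    refine (Finset.prod_eq_one fun i hi => ?_).symm
    have h2 : F i ⁻¹' sets i = Set.univ := by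
      ext ω; cases ω; simp [h i hi]
    rw [h2, measure_univ]
  · push_neg at h
    obtain ⟨i, hi, hni⟩ := h
    have h1 : (⋂ j ∈ s, F j ⁻¹' sets j) = ∅ := by
      ext ω
      cases ω
      simp only [Set.mem_iInter, Set.mem_preimage, Set.mem_empty_iff_false, iff_false, not_forall]
      exact ⟨i, hi, hni⟩
    rw [h1, measure_empty]
    refine (Finset.prod_eq_zero hi ?_).symm
    have h2 : F i ⁻¹' sets i = ∅ := by
      ext ω; cases ω; simp [hni]
    rw [h2, measure_empty]

noncomputable def SU : BanditMarket 3 3 where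
  Ω := Unit
  mΩ := inferInstance
  P := MeasureTheory.Measure.dirac ()
  probMeas := inferInstance
  σ := 1
  α := 3
  σpos := one_pos
  αgt := by norm_num
  μpref := μEx
  μnone := fun a => by cases a <;> rfl
  X := fun a b _ _ => μEx a (some b)
  X0 := fun a b _ _ => μEx a (some b)
  T0 := T0f
  T0pos := by decide
  T0symm := by decide
  Xmeas := fun _ _ _ => measurable_const
  X0meas := fun _ _ _ => measurable_const
  Xint := fun _ _ _ => MeasureTheory.integrable_const _
  Xmean := fun a b t => by rw [MeasureTheory.integral_dirac]
  Xsubg := fun a b t s => by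
    rw [MeasureTheory.integral_dirac]
    simp only [sub_self, mul_zero, Real.exp_zero]
    exact Real.one_le_exp (by positivity)
  X0subg := fun a b n s => by
    rw [MeasureTheory.integral_dirac]
    simp only [sub_self, mul_zero, Real.exp_zero]
    exact Real.one_le_exp (by positivity)
  indep := iIndepFun_dirac _
  identX := fun a b t t' => IdentDistrib.refl measurable_const.aemeasurable
  identX0 := fun a b t n => IdentDistrib.refl measurable_const.aemeasurable

/-- The policy. -/
noncomputable def Mtf : ℕ → SU.Ω → Matching 3 3 := fun t _ => sched t

lemma rew_eq (a : Agent 3 3) (ob : Option (Agent 3 3)) (t : ℕ) (ω : SU.Ω) :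
    rew SU a ob t ω = μEx a ob := by
  cases ob with
  | none => cases a <;> rfl
  | some b => rfl

lemma SUint (f : SU.Ω → ℝ) : ∫ ω, f ω ∂SU.P = f () := by
  have := MeasureTheory.integral_dirac (α := Unit) f (); exact this

end UnfairnessConstruction


section UnfairnessConstruction2

/-! #### matched-pair characterizations -/

lemma pred00 (τ : ℕ) : (Mtf τ ()).toFun (Sum.inl 0) = some (Sum.inr 0) ↔ IsPow 8 τ := by
  show (sched τ).toFun _ = _ ↔ _
  rw [sched]
  split_ifs with h1 h2 h3
  · simp [MI, h1, not89 h1, not825 h1]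
  · simp [MU, h1, h2, not925 h2]
  · simp [MA, h1, h2, h3]
  · simp [MP, h1, h2, h3]

lemma pred11 (τ : ℕ) : (Mtf τ ()).toFun (Sum.inl 1) = some (Sum.inr 1) ↔ IsPow 8 τ := by
  show (sched τ).toFun _ = _ ↔ _
  rw [sched]
  split_ifs with h1 h2 h3
  · simp [MI, h1, not89 h1, not825 h1]
  · simp [MU, h1, h2, not925 h2]
  · simp [MA, h1, h2, h3]
  · simp [MP, h1, h2, h3]

lemma pred12 (τ : ℕ) : (Mtf τ ()).toFun (Sum.inl 1) = some (Sum.inr 2) ↔ IsPow 9 τ := by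
  show (sched τ).toFun _ = _ ↔ _
  rw [sched]
  split_ifs with h1 h2 h3
  · simp [MI, h1, not89 h1, not825 h1]
  · simp [MU, h1, h2, not925 h2]
  · simp [MA, h1, h2, h3]
  · simp [MP, h1, h2, h3]

lemma pred20 (τ : ℕ) : (Mtf τ ()).toFun (Sum.inl 2) = some (Sum.inr 0) ↔ IsPow 9 τ := by
  show (sched τ).toFun _ = _ ↔ _
  rw [sched]
  split_ifs with h1 h2 h3
  · simp [MI, h1, not89 h1, not825 h1]
  · simp [MU, h1, h2, not925 h2]
  · simp [MA, h1, h2, h3]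
  · simp [MP, h1, h2, h3]

lemma pred02 (τ : ℕ) : (Mtf τ ()).toFun (Sum.inl 0) = some (Sum.inr 2) ↔ IsPow 25 τ := by
  show (sched τ).toFun _ = _ ↔ _
  rw [sched]
  split_ifs with h1 h2 h3
  · simp [MI, h1, not89 h1, not825 h1]
  · simp [MU, h1, h2, not925 h2]
  · simp [MA, h1, h2, h3]
  · simp [MP, h1, h2, h3]

lemma pred21 (τ : ℕ) : (Mtf τ ()).toFun (Sum.inl 2) = some (Sum.inr 1) ↔ IsPow 25 τ := by
  show (sched τ).toFun _ = _ ↔ _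
  rw [sched]
  split_ifs with h1 h2 h3
  · simp [MI, h1, not89 h1, not825 h1]
  · simp [MU, h1, h2, not925 h2]
  · simp [MA, h1, h2, h3]
  · simp [MP, h1, h2, h3]

lemma pred01 (τ : ℕ) : (Mtf τ ()).toFun (Sum.inl 0) = some (Sum.inr 1) ↔
    ¬ IsPow 8 τ ∧ ¬ IsPow 25 τ := by
  show (sched τ).toFun _ = _ ↔ _
  rw [sched]
  split_ifs with h1 h2 h3
  · simp [MI, h1, not89 h1, not825 h1]
  · simp [MU, h1, h2, not925 h2]
  · simp [MA, h1, h2, h3]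
  · simp [MP, h1, h2, h3]

lemma pred10 (τ : ℕ) : (Mtf τ ()).toFun (Sum.inl 1) = some (Sum.inr 0) ↔
    ¬ IsPow 8 τ ∧ ¬ IsPow 9 τ := by
  show (sched τ).toFun _ = _ ↔ _
  rw [sched]
  split_ifs with h1 h2 h3
  · simp [MI, h1, not89 h1, not825 h1]
  · simp [MU, h1, h2, not925 h2]
  · simp [MA, h1, h2, h3]
  · simp [MP, h1, h2, h3]

lemma pred22 (τ : ℕ) : (Mtf τ ()).toFun (Sum.inl 2) = some (Sum.inr 2) ↔
    ¬ IsPow 9 τ ∧ ¬ IsPow 25 τ := by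
  show (sched τ).toFun _ = _ ↔ _
  rw [sched]
  split_ifs with h1 h2 h3
  · simp [MI, h1, not89 h1, not825 h1]
  · simp [MU, h1, h2, not925 h2]
  · simp [MA, h1, h2, h3]
  · simp [MP, h1, h2, h3]

/-! #### count values -/

lemma cnt00 (m : ℕ) : histCount SU Mtf (Sum.inl 0) (Sum.inr 0) m () = 1 + Nat.log 8 m := by
  unfold histCount
  rw [Finset.filter_congr (fun τ _ => pred00 τ), card_pow_filter (by norm_num)]
  norm_num [show SU.T0 (Sum.inl 0) (Sum.inr 0) = 1 from rfl]

lemma cnt11 (m : ℕ) : histCount SU Mtf (Sum.inl 1) (Sum.inr 1) m () = 1 + Nat.log 8 m := by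
  unfold histCount
  rw [Finset.filter_congr (fun τ _ => pred11 τ), card_pow_filter (by norm_num)]
  norm_num [show SU.T0 (Sum.inl 1) (Sum.inr 1) = 1 from rfl]

lemma cnt12 (m : ℕ) : histCount SU Mtf (Sum.inl 1) (Sum.inr 2) m () = 1 + Nat.log 9 m := by
  unfold histCount
  rw [Finset.filter_congr (fun τ _ => pred12 τ), card_pow_filter (by norm_num)]
  norm_num [show SU.T0 (Sum.inl 1) (Sum.inr 2) = 1 from rfl]

lemma cnt20 (m : ℕ) : histCount SU Mtf (Sum.inl 2) (Sum.inr 0) m () = 1 + Nat.log 9 m := by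
  unfold histCount
  rw [Finset.filter_congr (fun τ _ => pred20 τ), card_pow_filter (by norm_num)]
  norm_num [show SU.T0 (Sum.inl 2) (Sum.inr 0) = 1 from rfl]

lemma cnt02 (m : ℕ) : histCount SU Mtf (Sum.inl 0) (Sum.inr 2) m () = 1 + Nat.log 25 m := by
  unfold histCount
  rw [Finset.filter_congr (fun τ _ => pred02 τ), card_pow_filter (by norm_num)]
  norm_num [show SU.T0 (Sum.inl 0) (Sum.inr 2) = 1 from rfl]

lemma cnt21 (m : ℕ) : histCount SU Mtf (Sum.inl 2) (Sum.inr 1) m () = 1 + Nat.log 25 m := by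
  unfold histCount
  rw [Finset.filter_congr (fun τ _ => pred21 τ), card_pow_filter (by norm_num)]
  norm_num [show SU.T0 (Sum.inl 2) (Sum.inr 1) = 1 from rfl]

lemma cnt01 (m : ℕ) : m + 200 ≤ 2 * histCount SU Mtf (Sum.inl 0) (Sum.inr 1) m () := by
  unfold histCount
  rw [Finset.filter_congr (fun τ _ => pred01 τ),
    show SU.T0 (Sum.inl 0) (Sum.inr 1) = 100 from rfl]
  have e2 := Finset.card_filter_add_card_filter_not
    (s := Finset.Icc 1 m) (p := fun τ => IsPow 8 τ ∨ IsPow 25 τ)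
  have e2' : (Finset.Icc 1 m).filter (fun τ => ¬ (IsPow 8 τ ∨ IsPow 25 τ))
      = (Finset.Icc 1 m).filter (fun τ => ¬ IsPow 8 τ ∧ ¬ IsPow 25 τ) :=
    Finset.filter_congr (fun τ _ => by tauto)
  rw [e2'] at e2
  have e3 : ((Finset.Icc 1 m).filter (fun τ => IsPow 8 τ ∨ IsPow 25 τ)).card
      ≤ Nat.log 8 m + Nat.log 25 m := by
    rw [Finset.filter_or]
    calc _ ≤ _ := Finset.card_union_le _ _
      _ = _ := by rw [card_pow_filter (by norm_num), card_pow_filter (by norm_num)]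
  have e4 : 4 * Nat.log 8 m ≤ m := log_le_quarter (by norm_num)
  have e5 : 4 * Nat.log 25 m ≤ m := log_le_quarter (by norm_num)
  have e6 : (Finset.Icc 1 m).card = m := by rw [Nat.card_Icc]; omega
  omega

lemma cnt10 (m : ℕ) : m + 200 ≤ 2 * histCount SU Mtf (Sum.inl 1) (Sum.inr 0) m () := by
  unfold histCount
  rw [Finset.filter_congr (fun τ _ => pred10 τ),
    show SU.T0 (Sum.inl 1) (Sum.inr 0) = 100 from rfl]
  have e2 := Finset.card_filter_add_card_filter_not
    (s := Finset.Icc 1 m) (p := fun τ => IsPow 8 τ ∨ IsPow 9 τ)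
  have e2' : (Finset.Icc 1 m).filter (fun τ => ¬ (IsPow 8 τ ∨ IsPow 9 τ))
      = (Finset.Icc 1 m).filter (fun τ => ¬ IsPow 8 τ ∧ ¬ IsPow 9 τ) :=
    Finset.filter_congr (fun τ _ => by tauto)
  rw [e2'] at e2
  have e3 : ((Finset.Icc 1 m).filter (fun τ => IsPow 8 τ ∨ IsPow 9 τ)).card
      ≤ Nat.log 8 m + Nat.log 9 m := by
    rw [Finset.filter_or]
    calc _ ≤ _ := Finset.card_union_le _ _
      _ = _ := by rw [card_pow_filter (by norm_num), card_pow_filter (by norm_num)]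
  have e4 : 4 * Nat.log 8 m ≤ m := log_le_quarter (by norm_num)
  have e5 : 4 * Nat.log 9 m ≤ m := log_le_quarter (by norm_num)
  have e6 : (Finset.Icc 1 m).card = m := by rw [Nat.card_Icc]; omega
  omega

lemma cnt22 (m : ℕ) : m + 200 ≤ 2 * histCount SU Mtf (Sum.inl 2) (Sum.inr 2) m () := by
  unfold histCount
  rw [Finset.filter_congr (fun τ _ => pred22 τ),
    show SU.T0 (Sum.inl 2) (Sum.inr 2) = 100 from rfl]
  have e2 := Finset.card_filter_add_card_filter_not
    (s := Finset.Icc 1 m) (p := fun τ => IsPow 9 τ ∨ IsPow 25 τ)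
  have e2' : (Finset.Icc 1 m).filter (fun τ => ¬ (IsPow 9 τ ∨ IsPow 25 τ))
      = (Finset.Icc 1 m).filter (fun τ => ¬ IsPow 9 τ ∧ ¬ IsPow 25 τ) :=
    Finset.filter_congr (fun τ _ => by tauto)
  rw [e2'] at e2
  have e3 : ((Finset.Icc 1 m).filter (fun τ => IsPow 9 τ ∨ IsPow 25 τ)).card
      ≤ Nat.log 9 m + Nat.log 25 m := by
    rw [Finset.filter_or]
    calc _ ≤ _ := Finset.card_union_le _ _
      _ = _ := by rw [card_pow_filter (by norm_num), card_pow_filter (by norm_num)]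
  have e4 : 4 * Nat.log 9 m ≤ m := log_le_quarter (by norm_num)
  have e5 : 4 * Nat.log 25 m ≤ m := log_le_quarter (by norm_num)
  have e6 : (Finset.Icc 1 m).card = m := by rw [Nat.card_Icc]; omega
  omega

/-! #### nu evaluation -/

lemma histCount_symm (a b : Agent 3 3) (m : ℕ) (ω : SU.Ω) :
    histCount SU Mtf a b m ω = histCount SU Mtf b a m ω := by
  unfold histCount
  rw [SU.T0symm a b, Finset.filter_congr (fun τ _ => (Mtf τ ω).mutual_match a b)]

lemma nu_eval (t : ℕ) (ω : SU.Ω) (a b : Agent 3 3) :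
    nu SU Mtf t ω a (some b) = μEx a (some b) +
      Real.sqrt (6 * Real.log t / (histCount SU Mtf a b (t-1) ω : ℝ)) := by
  have hpos : 0 < histCount SU Mtf a b (t-1) ω :=
    lt_of_lt_of_le (SU.T0pos a b) (by unfold histCount; exact Nat.le_add_right _ _)
  have hposR : (0:ℝ) < (histCount SU Mtf a b (t-1) ω : ℝ) := by exact_mod_cast hpos
  have hnum : ((∑ τ ∈ Finset.Icc 1 (t-1), if (Mtf τ ω).toFun a = some b then SU.X a b τ ω else 0)
      + ∑ n ∈ Finset.range (SU.T0 a b), SU.X0 a b n ω)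
      = (histCount SU Mtf a b (t-1) ω : ℝ) * μEx a (some b) := by
    have h1 : ∀ τ ∈ Finset.Icc 1 (t-1),
        (if (Mtf τ ω).toFun a = some b then SU.X a b τ ω else 0)
        = (if (Mtf τ ω).toFun a = some b then μEx a (some b) else 0) := by
      intro τ _; split <;> rfl
    have h0 : ∀ n ∈ Finset.range (SU.T0 a b), SU.X0 a b n ω = μEx a (some b) := fun _ _ => rfl
    rw [Finset.sum_congr rfl h1, ← Finset.sum_filter, Finset.sum_const,
      Finset.sum_congr rfl h0, Finset.sum_const, Finset.card_range]
    unfold histCount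
    push_cast
    ring
  have hσ : 2 * SU.σ^2 * SU.α = (6:ℝ) := by
    rw [show SU.σ = 1 from rfl, show SU.α = 3 from rfl]; norm_num
  show (((∑ τ ∈ Finset.Icc 1 (t-1), if (Mtf τ ω).toFun a = some b then SU.X a b τ ω else 0)
      + ∑ n ∈ Finset.range (SU.T0 a b), SU.X0 a b n ω)
      / (histCount SU Mtf a b (t-1) ω : ℝ)
      + Real.sqrt (2 * SU.σ^2 * SU.α * Real.log (t:ℝ) / (histCount SU Mtf a b (t-1) ω : ℝ))) = _
  rw [hnum, hσ, mul_comm ((histCount SU Mtf a b (t-1) ω : ℝ)) (μEx a (some b)),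
    mul_div_assoc, div_self hposR.ne', mul_one]

noncomputable def bon (i j : Fin 3) (t : ℕ) : ℝ :=
  Real.sqrt (6 * Real.log t / (histCount SU Mtf (Sum.inl i) (Sum.inr j) (t-1) () : ℝ))

lemma nu_user (t : ℕ) (i j : Fin 3) :
    nu SU Mtf t () (Sum.inl i) (some (Sum.inr j)) = uVal i j + bon i j t :=
  nu_eval t () _ _

lemma nu_prov (t : ℕ) (j i : Fin 3) :
    nu SU Mtf t () (Sum.inr j) (some (Sum.inl i)) = pVal j i + bon i j t := by
  rw [nu_eval t () _ _]; erw [histCount_symm]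
  rfl

lemma bon_nonneg (i j : Fin 3) (t : ℕ) : 0 ≤ bon i j t := Real.sqrt_nonneg _

/-! #### bonus bounds -/

lemma bon00_le {t : ℕ} (ht : 1 ≤ t) : bon 0 0 t ≤ b8 := by
  rw [bon, cnt00]
  simpa [b8] using cap_bound (b := 8) (t := t) (by norm_num) ht

lemma bon11_le {t : ℕ} (ht : 1 ≤ t) : bon 1 1 t ≤ b8 := by
  rw [bon, cnt11]
  simpa [b8] using cap_bound (b := 8) (t := t) (by norm_num) ht

lemma bon12_le {t : ℕ} (ht : 1 ≤ t) : bon 1 2 t ≤ b9 := by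
  rw [bon, cnt12]
  simpa [b9] using cap_bound (b := 9) (t := t) (by norm_num) ht

lemma bon20_le {t : ℕ} (ht : 1 ≤ t) : bon 2 0 t ≤ b9 := by
  rw [bon, cnt20]
  simpa [b9] using cap_bound (b := 9) (t := t) (by norm_num) ht

lemma bon02_le {t : ℕ} (ht : 1 ≤ t) : bon 0 2 t ≤ b25 := by
  rw [bon, cnt02]
  simpa [b25] using cap_bound (b := 25) (t := t) (by norm_num) ht

lemma bon21_le {t : ℕ} (ht : 1 ≤ t) : bon 2 1 t ≤ b25 := by
  rw [bon, cnt21]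
  simpa [b25] using cap_bound (b := 25) (t := t) (by norm_num) ht

lemma bon11_eq {k : ℕ} (hk : 1 ≤ k) : bon 1 1 (8^k) = b8 := by
  rw [bon, cnt11]
  simpa [b8] using plateau (b := 8) (k := k) (by norm_num) hk

lemma bon12_eq {k : ℕ} (hk : 1 ≤ k) : bon 1 2 (9^k) = b9 := by
  rw [bon, cnt12]
  simpa [b9] using plateau (b := 9) (k := k) (by norm_num) hk

lemma bon02_eq {k : ℕ} (hk : 1 ≤ k) : bon 0 2 (25^k) = b25 := by
  rw [bon, cnt02]
  simpa [b25] using plateau (b := 25) (k := k) (by norm_num) hk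

lemma bon01_le {t : ℕ} (ht : 1 ≤ t) : bon 0 1 t ≤ b8 / 2 := by
  rw [bon]
  apply bP_bound ht
  have := cnt01 (t-1)
  have h1 : (t:ℝ) - 1 + 200 ≤ 2 * (histCount SU Mtf (Sum.inl 0) (Sum.inr 1) (t-1) () : ℝ) := by
    have h2 : ((t-1 : ℕ) : ℝ) = (t:ℝ) - 1 := by
      have : (1:ℕ) ≤ t := ht
      push_cast [Nat.cast_sub this]
      ring
    rw [← h2]
    exact_mod_cast this
  linarith

lemma bon10_le {t : ℕ} (ht : 1 ≤ t) : bon 1 0 t ≤ b8 / 2 := by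
  rw [bon]
  apply bP_bound ht
  have := cnt10 (t-1)
  have h1 : (t:ℝ) - 1 + 200 ≤ 2 * (histCount SU Mtf (Sum.inl 1) (Sum.inr 0) (t-1) () : ℝ) := by
    have h2 : ((t-1 : ℕ) : ℝ) = (t:ℝ) - 1 := by
      have : (1:ℕ) ≤ t := ht
      push_cast [Nat.cast_sub this]
      ring
    rw [← h2]
    exact_mod_cast this
  linarith

lemma bon22_le {t : ℕ} (ht : 1 ≤ t) : bon 2 2 t ≤ b8 / 2 := by
  rw [bon]
  apply bP_bound ht
  have := cnt22 (t-1)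
  have h1 : (t:ℝ) - 1 + 200 ≤ 2 * (histCount SU Mtf (Sum.inl 2) (Sum.inr 2) (t-1) () : ℝ) := by
    have h2 : ((t-1 : ℕ) : ℝ) = (t:ℝ) - 1 := by
      have : (1:ℕ) ≤ t := ht
      push_cast [Nat.cast_sub this]
      ring
    rw [← h2]
    exact_mod_cast this
  linarith

end UnfairnessConstruction2


section UnfairnessConstruction3

/-! #### stability of the policy -/

theorem stable_all (t : ℕ) (ht : 1 ≤ t) : IsStable (nu SU Mtf t ()) (sched t) := by
  have n00 := bon_nonneg 0 0 t; have n01 := bon_nonneg 0 1 t; have n02 := bon_nonneg 0 2 t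
  have n10 := bon_nonneg 1 0 t; have n11 := bon_nonneg 1 1 t; have n12 := bon_nonneg 1 2 t
  have n20 := bon_nonneg 2 0 t; have n21 := bon_nonneg 2 1 t; have n22 := bon_nonneg 2 2 t
  have c00 := bon00_le ht; have c11 := bon11_le ht
  have c12 := bon12_le ht; have c20 := bon20_le ht
  have c02 := bon02_le ht; have c21 := bon21_le ht
  have c01 := bon01_le ht; have c10 := bon10_le ht; have c22 := bon22_le ht
  have hb8 := b8_pos
  have h89 := b8_le_b9
  have h925 := b9_lt_b25.le
  have hG : Gv = b25 + 1 := rfl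
  have hdv : dv + b9 = b25 := dv_add
  have hdv0 := dv_pos.le
  by_cases h8 : IsPow 8 t
  · have e11 : bon 1 1 t = b8 := by
      obtain ⟨k, hk, rfl⟩ := (isPow_iff (by norm_num) (t := t)).1 h8
      exact bon11_eq hk
    rw [sched_pow8 h8]
    rintro ⟨u, p, h1, h2⟩
    fin_cases u <;> fin_cases p <;>
      simp only [MI, Sum.elim_inl, Sum.elim_inr, Matrix.cons_val_zero, Matrix.cons_val_one,
        Matrix.cons_val_two, Matrix.head_cons, Matrix.tail_cons, nu_user, nu_prov,
        uVal, pVal, Fin.isValue, fin3_mk0, fin3_mk1, fin3_mk2] at h1 h2 <;>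
      linarith
  · by_cases h9 : IsPow 9 t
    · have e12 : bon 1 2 t = b9 := by
        obtain ⟨k, hk, rfl⟩ := (isPow_iff (by norm_num) (t := t)).1 h9
        exact bon12_eq hk
      rw [sched_pow9 h9]
      rintro ⟨u, p, h1, h2⟩
      fin_cases u <;> fin_cases p <;>
        simp only [MU, Sum.elim_inl, Sum.elim_inr, Matrix.cons_val_zero, Matrix.cons_val_one,
          Matrix.cons_val_two, Matrix.head_cons, Matrix.tail_cons, nu_user, nu_prov,
          uVal, pVal, Fin.isValue, fin3_mk0, fin3_mk1, fin3_mk2] at h1 h2 <;>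
        linarith
    · by_cases h25 : IsPow 25 t
      · have e02 : bon 0 2 t = b25 := by
          obtain ⟨k, hk, rfl⟩ := (isPow_iff (by norm_num) (t := t)).1 h25
          exact bon02_eq hk
        rw [sched_pow25 h25]
        rintro ⟨u, p, h1, h2⟩
        fin_cases u <;> fin_cases p <;>
          simp only [MA, Sum.elim_inl, Sum.elim_inr, Matrix.cons_val_zero, Matrix.cons_val_one,
            Matrix.cons_val_two, Matrix.head_cons, Matrix.tail_cons, nu_user, nu_prov,
            uVal, pVal, Fin.isValue, fin3_mk0, fin3_mk1, fin3_mk2] at h1 h2 <;>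
          linarith
      · rw [sched_mp h8 h9 h25]
        rintro ⟨u, p, h1, h2⟩
        fin_cases u <;> fin_cases p <;>
          simp only [MP, Sum.elim_inl, Sum.elim_inr, Matrix.cons_val_zero, Matrix.cons_val_one,
            Matrix.cons_val_two, Matrix.head_cons, Matrix.tail_cons, nu_user, nu_prov,
            uVal, pVal, Fin.isValue, fin3_mk0, fin3_mk1, fin3_mk2] at h1 h2 <;>
          linarith

/-! #### facts about the preferences -/

lemma uVal_pos (i j : Fin 3) : 0 < uVal i j := by
  fin_cases i <;> fin_cases j <;>
    simp only [uVal, Matrix.cons_val_zero, Matrix.cons_val_one, Matrix.cons_val_two,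
      Matrix.head_cons, Matrix.tail_cons, Fin.isValue, fin3_mk0, fin3_mk1, fin3_mk2] <;>
    linarith [Gv_pos]

lemma pVal_pos (j i : Fin 3) : 0 < pVal j i := by
  fin_cases j <;> fin_cases i <;>
    simp only [pVal, Matrix.cons_val_zero, Matrix.cons_val_one, Matrix.cons_val_two,
      Matrix.head_cons, Matrix.tail_cons, Fin.isValue, fin3_mk0, fin3_mk1, fin3_mk2] <;>
    linarith [Gv_pos, dv_pos, b8_pos]

lemma uVal_inj (i : Fin 3) {j j' : Fin 3} (h : j ≠ j') : uVal i j ≠ uVal i j' := by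
  fin_cases i <;> fin_cases j <;> fin_cases j' <;> (try exact absurd rfl h) <;>
    simp only [uVal, Matrix.cons_val_zero, Matrix.cons_val_one, Matrix.cons_val_two,
      Matrix.head_cons, Matrix.tail_cons, Fin.isValue, fin3_mk0, fin3_mk1, fin3_mk2] <;>
    intro he <;> linarith [Gv_pos]

lemma pVal_inj (j : Fin 3) {i i' : Fin 3} (h : i ≠ i') : pVal j i ≠ pVal j i' := by
  fin_cases j <;> fin_cases i <;> fin_cases i' <;> (try exact absurd rfl h) <;>
    simp only [pVal, Matrix.cons_val_zero, Matrix.cons_val_one, Matrix.cons_val_two,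
      Matrix.head_cons, Matrix.tail_cons, Fin.isValue, fin3_mk0, fin3_mk1, fin3_mk2] <;>
    intro he <;> linarith [Gv_pos, dv_pos, b8_pos]

lemma tieFree_μEx : TieFree μEx := by
  rintro (i | j) (_ | (bi | bj)) (_ | (ci | cj)) hb hb' hne
  · exact absurd rfl hne
  · exact hb'.elim
  · exact (uVal_pos i cj).ne
  · exact hb.elim
  · exact hb.elim
  · exact hb.elim
  · exact (uVal_pos i bj).ne'
  · exact hb'.elim
  · exact uVal_inj i (fun h => hne (by rw [h]))
  · exact absurd rfl hne
  · exact (pVal_pos j ci).ne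
  · exact hb'.elim
  · exact (pVal_pos j bi).ne'
  · exact pVal_inj j (fun h => hne (by rw [h]))
  · exact hb'.elim
  · exact hb.elim
  · exact hb.elim
  · exact hb.elim

lemma exPrefs : ExampleOnePrefs μEx := by
  refine ⟨?_, ?_, ?_, ?_, ?_, ?_, ?_, ?_, ?_, ?_, ?_, ?_⟩ <;>
    (show _ < _) <;>
    simp only [μEx_user, μEx_prov, uVal, pVal, Matrix.cons_val_zero, Matrix.cons_val_one,
      Matrix.cons_val_two, Matrix.head_cons, Matrix.tail_cons, Fin.isValue, fin3_mk0, fin3_mk1, fin3_mk2] <;>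
    linarith [Gv_pos, dv_pos, b8_pos, dv_lt_Gv]

lemma MU_stable : IsStable μEx MU := by
  rintro ⟨u, p, h1, h2⟩
  fin_cases u <;> fin_cases p <;>
    simp only [MU, Sum.elim_inl, Sum.elim_inr, Matrix.cons_val_zero, Matrix.cons_val_one,
      Matrix.cons_val_two, Matrix.head_cons, Matrix.tail_cons, μEx_user, μEx_prov,
      uVal, pVal, Fin.isValue, fin3_mk0, fin3_mk1, fin3_mk2] at h1 h2 <;>
    linarith [Gv_pos, dv_pos, b8_pos]

lemma pVal_le (p i : Fin 3) : pVal p i ≤ 1 + 2*Gv := by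
  fin_cases p <;> fin_cases i <;>
    simp only [pVal, Matrix.cons_val_zero, Matrix.cons_val_one, Matrix.cons_val_two,
      Matrix.head_cons, Matrix.tail_cons, Fin.isValue, fin3_mk0, fin3_mk1, fin3_mk2] <;>
    linarith [Gv_pos, dv_lt_Gv, b8_lt_Gv, b8_pos, dv_pos]

lemma pVal_ge (p i : Fin 3) : 1 ≤ pVal p i := by
  fin_cases p <;> fin_cases i <;>
    simp only [pVal, Matrix.cons_val_zero, Matrix.cons_val_one, Matrix.cons_val_two,
      Matrix.head_cons, Matrix.tail_cons, Fin.isValue, fin3_mk0, fin3_mk1, fin3_mk2] <;>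
    linarith [Gv_pos, dv_pos, b8_pos]

lemma mo_provider_bound {M' : Matching 3 3} (hst : IsStable μEx M') (p : Fin 3)
    {i : Fin 3} (hi : M'.toFun (Sum.inr p) = some (Sum.inl i)) :
    pVal p i ≤ pVal p (![1,0,2] p) := by
  fin_cases p
  · fin_cases i
    · exfalso
      apply hst
      obtain ⟨i', hi'⟩ := M'.provider_matched 1
      refine ⟨0, 1, ?_, ?_⟩
      · have h0 : M'.toFun (Sum.inl 0) = some (Sum.inr 0) :=
          (M'.mutual_match (Sum.inr 0) (Sum.inl 0)).1 hi
        rw [h0]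
        show uVal 0 0 < uVal 0 1
        simp only [uVal, Matrix.cons_val_zero, Matrix.cons_val_one, Matrix.head_cons,
          Fin.isValue, fin3_mk0, fin3_mk1, fin3_mk2]
        linarith [Gv_pos]
      · rw [hi']
        show pVal 1 i' < pVal 1 0
        have hne : i' ≠ 0 := by
          intro h
          rw [h] at hi'
          have h1 : M'.toFun (Sum.inl 0) = some (Sum.inr 1) :=
            (M'.mutual_match (Sum.inr 1) (Sum.inl 0)).1 hi'
          have h0 : M'.toFun (Sum.inl 0) = some (Sum.inr 0) :=
            (M'.mutual_match (Sum.inr 0) (Sum.inl 0)).1 hi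
          rw [h0] at h1
          simp at h1
        fin_cases i'
        · exact absurd rfl hne
        · simp only [pVal, Matrix.cons_val_zero, Matrix.cons_val_one, Matrix.head_cons,
            Fin.isValue, fin3_mk0, fin3_mk1, fin3_mk2]
          linarith [b8_pos]
        · simp only [pVal, Matrix.cons_val_zero, Matrix.cons_val_one, Matrix.cons_val_two,
            Matrix.head_cons, Matrix.tail_cons, Fin.isValue, fin3_mk0, fin3_mk1, fin3_mk2]
          linarith [b8_pos, Gv_pos]
    · simp only [pVal, Matrix.cons_val_zero, Matrix.cons_val_one, Matrix.cons_val_two,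
        Matrix.head_cons, Matrix.tail_cons, Fin.isValue, fin3_mk0, fin3_mk1, fin3_mk2]
      linarith
    · simp only [pVal, Matrix.cons_val_zero, Matrix.cons_val_one, Matrix.cons_val_two,
        Matrix.head_cons, Matrix.tail_cons, Fin.isValue, fin3_mk0, fin3_mk1, fin3_mk2]
      linarith [Gv_pos]
  · fin_cases i <;>
      simp only [pVal, Matrix.cons_val_zero, Matrix.cons_val_one, Matrix.cons_val_two,
        Matrix.head_cons, Matrix.tail_cons, Fin.isValue, fin3_mk0, fin3_mk1, fin3_mk2] <;>
      linarith [b8_pos, Gv_pos]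
  · fin_cases i <;>
      simp only [pVal, Matrix.cons_val_zero, Matrix.cons_val_one, Matrix.cons_val_two,
        Matrix.head_cons, Matrix.tail_cons, Fin.isValue, fin3_mk0, fin3_mk1, fin3_mk2] <;>
      linarith [dv_pos, Gv_pos]

/-! #### regret bounds -/

lemma provider_regret (p : Fin 3) (A : ℝ) (hA1 : A ≤ pVal p (![1,0,2] p))
    (hA2 : A ≤ 1 + 2*Gv) (T : ℕ) (hT : 1 ≤ T) :
    ∑ t ∈ Finset.Icc 1 T, (A - μEx (Sum.inr p) ((sched t).toFun (Sum.inr p)))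
      ≤ 3 * Gv * Real.log T := by
  have hstep : ∀ t ∈ Finset.Icc 1 T, A - μEx (Sum.inr p) ((sched t).toFun (Sum.inr p))
      ≤ if (IsPow 8 t ∨ IsPow 9 t ∨ IsPow 25 t) then 2*Gv else 0 := by
    intro t _
    split_ifs with h
    · obtain ⟨i, hi⟩ := (sched t).provider_matched p
      rw [hi]
      show A - pVal p i ≤ 2*Gv
      linarith [pVal_ge p i]
    · push_neg at h
      rw [sched_mp h.1 h.2.1 h.2.2]
      have hmp : MP.toFun (Sum.inr p) = some (Sum.inl (![1,0,2] p)) := by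
        fin_cases p <;> rfl
      rw [hmp]
      show A - pVal p (![1,0,2] p) ≤ 0
      linarith
  have hcard : (((Finset.Icc 1 T).filter
      (fun t => IsPow 8 t ∨ IsPow 9 t ∨ IsPow 25 t)).card : ℝ) ≤ 3 * (Nat.log 8 T : ℝ) := by
    have e0 : ((Finset.Icc 1 T).filter (fun t => IsPow 8 t ∨ IsPow 9 t ∨ IsPow 25 t))
        = ((Finset.Icc 1 T).filter (fun t => IsPow 8 t)) ∪
          (((Finset.Icc 1 T).filter (fun t => IsPow 9 t)) ∪
           ((Finset.Icc 1 T).filter (fun t => IsPow 25 t))) := by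
      rw [← Finset.filter_or, ← Finset.filter_or]
    have ha := Finset.card_union_le ((Finset.Icc 1 T).filter (fun t => IsPow 8 t))
      (((Finset.Icc 1 T).filter (fun t => IsPow 9 t)) ∪
        ((Finset.Icc 1 T).filter (fun t => IsPow 25 t)))
    have hb := Finset.card_union_le ((Finset.Icc 1 T).filter (fun t => IsPow 9 t))
      ((Finset.Icc 1 T).filter (fun t => IsPow 25 t))
    have hc8 := card_pow_filter (b := 8) (by norm_num) T
    have hc9 := card_pow_filter (b := 9) (by norm_num) T
    have hc25 := card_pow_filter (b := 25) (by norm_num) T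
    have h2 : Nat.log 9 T ≤ Nat.log 8 T := Nat.log_anti_left (b := 9) (c := 8) (by norm_num) (by norm_num)
    have h3 : Nat.log 25 T ≤ Nat.log 8 T := Nat.log_anti_left (b := 25) (c := 8) (by norm_num) (by norm_num)
    have h4 : ((Finset.Icc 1 T).filter
        (fun t => IsPow 8 t ∨ IsPow 9 t ∨ IsPow 25 t)).card ≤ 3 * Nat.log 8 T := by
      rw [e0]; omega
    exact_mod_cast h4
  have hlog : (Nat.log 8 T : ℝ) * 2 ≤ Real.log T := by
    have hp : (8:ℝ) ^ (Nat.log 8 T) ≤ (T:ℝ) := by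
      exact_mod_cast Nat.pow_log_le_self 8 (by omega)
    have h5 := Real.log_le_log (by positivity) hp
    rw [Real.log_pow] at h5
    nlinarith [log8_ge_two, (by positivity : (0:ℝ) ≤ (Nat.log 8 T : ℝ))]
  calc ∑ t ∈ Finset.Icc 1 T, (A - μEx (Sum.inr p) ((sched t).toFun (Sum.inr p)))
      ≤ ∑ t ∈ Finset.Icc 1 T, (if (IsPow 8 t ∨ IsPow 9 t ∨ IsPow 25 t) then 2*Gv else 0) :=
        Finset.sum_le_sum hstep
    _ = (((Finset.Icc 1 T).filter
          (fun t => IsPow 8 t ∨ IsPow 9 t ∨ IsPow 25 t)).card : ℝ) * (2*Gv) := by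
        rw [← Finset.sum_filter, Finset.sum_const, nsmul_eq_mul]
    _ ≤ 3 * Gv * Real.log T := by
        nlinarith [Gv_pos, mul_nonneg Gv_pos.le
          (sub_nonneg.2 hlog), mul_le_mul_of_nonneg_right hcard (by linarith [Gv_pos] :
            (0:ℝ) ≤ 2*Gv), mul_nonneg (by positivity : (0:ℝ) ≤ (Nat.log 8 T : ℝ)) Gv_pos.le]
  

lemma user_regret (A : ℝ) (hA : 1 + 2*Gv ≤ A) (T : ℕ) :
    Gv / 2 * T ≤ ∑ t ∈ Finset.Icc 1 T, (A - μEx (Sum.inl 1) ((sched t).toFun (Sum.inl 1))) := by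
  have hstep : ∀ t ∈ Finset.Icc 1 T,
      (if IsPow 9 t then (0:ℝ) else Gv) ≤ A - μEx (Sum.inl 1) ((sched t).toFun (Sum.inl 1)) := by
    intro t _
    split_ifs with h9
    · rw [sched_pow9 h9]
      show (0:ℝ) ≤ A - uVal 1 2
      have hv : uVal 1 2 = 1 + 2*Gv := by
        simp only [uVal, Matrix.cons_val_zero, Matrix.cons_val_one, Matrix.cons_val_two, Matrix.head_cons,
          Matrix.tail_cons, Fin.isValue, fin3_mk0, fin3_mk1, fin3_mk2]
      linarith
    · by_cases h8 : IsPow 8 t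
      · rw [sched_pow8 h8]
        show Gv ≤ A - uVal 1 1
        have hv : uVal 1 1 = 1 := by
          simp only [uVal, Matrix.cons_val_zero, Matrix.cons_val_one, Matrix.head_cons, Fin.isValue, fin3_mk0, fin3_mk1, fin3_mk2]
        linarith [Gv_pos]
      · by_cases h25 : IsPow 25 t
        · rw [sched_pow25 h25]
          show Gv ≤ A - uVal 1 0
          have hv : uVal 1 0 = 1 + Gv := by
            simp only [uVal, Matrix.cons_val_zero, Matrix.cons_val_one, Matrix.head_cons,
              Fin.isValue, fin3_mk0, fin3_mk1, fin3_mk2]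
          linarith
        · rw [sched_mp h8 h9 h25]
          show Gv ≤ A - uVal 1 0
          have hv : uVal 1 0 = 1 + Gv := by
            simp only [uVal, Matrix.cons_val_zero, Matrix.cons_val_one, Matrix.head_cons,
              Fin.isValue, fin3_mk0, fin3_mk1, fin3_mk2]
          linarith
  have h4 : 4 * Nat.log 9 T ≤ T := log_le_quarter (by norm_num)
  have hcc : ((Finset.Icc 1 T).filter (fun t => ¬ IsPow 9 t)).card = T - Nat.log 9 T := by
    have hc := Finset.card_filter_add_card_filter_not
      (s := Finset.Icc 1 T) (p := fun t => IsPow 9 t)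
    rw [card_pow_filter (by norm_num : 2 ≤ 9)] at hc
    have hIcc : (Finset.Icc 1 T).card = T := by rw [Nat.card_Icc]; omega
    omega
  have hsum : ∑ t ∈ Finset.Icc 1 T, (if IsPow 9 t then (0:ℝ) else Gv)
      = ((T - Nat.log 9 T : ℕ) : ℝ) * Gv := by
    rw [Finset.sum_ite, Finset.sum_const_zero, Finset.sum_const, zero_add, nsmul_eq_mul, hcc]
  have hfinal := Finset.sum_le_sum hstep
  rw [hsum] at hfinal
  have hcast : ((T - Nat.log 9 T : ℕ) : ℝ) = (T:ℝ) - (Nat.log 9 T : ℝ) := by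
    rw [Nat.cast_sub (by omega)]
  rw [hcast] at hfinal
  have h4R : 4 * (Nat.log 9 T : ℝ) ≤ (T:ℝ) := by exact_mod_cast h4
  have hx : (0:ℝ) ≤ ((T:ℝ) - (Nat.log 9 T : ℝ)) - (T:ℝ)/2 := by linarith
  linarith [mul_nonneg Gv_pos.le hx, hfinal]

end UnfairnessConstruction3


/-- In the no-cost, no-transfer setting, fairness is not guaranteed under
incentive compatibility: there exist a market with true preferences given by Example 1
(`N = L = 3`) together with an incentive-compatible matching policy (stable under `ν_t`
at every step) such that the optimal regret of every provider is `O(log T)` while the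
optimal regret of some user is `Ω(T)`.  Here
`R̄(a;M) = E[∑_{t=1}^T (X_t(a,M̄^a(a)) − X_t(a,M(a;ν_t)))]` for any choice of optimal
stable matchings `M̄^a` under `μ`. -/
theorem unfairness_example :
    ∃ (S : BanditMarket 3 3) (Mt : ℕ → S.Ω → Matching 3 3),
      TieFree S.μpref ∧
      (∀ a b : Agent 3 3, OppositeOpt a (some b) → 0 < S.μpref a (some b)) ∧
      ExampleOnePrefs S.μpref ∧
      (∀ (t : ℕ) (a : Agent 3 3) (b : Option (Agent 3 3)),
        MeasurableSet {ω : S.Ω | (Mt t ω).toFun a = b}) ∧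
      (∀ t, 1 ≤ t → ∀ ω, IsStable (nu S Mt t ω) (Mt t ω)) ∧
      ∀ Mo : Agent 3 3 → Matching 3 3,
        (∀ a : Agent 3 3, IsStable S.μpref (Mo a) ∧
          ∀ M' : Matching 3 3, IsStable S.μpref M' →
            S.μpref a (M'.toFun a) ≤ S.μpref a ((Mo a).toFun a)) →
        (∀ p : Fin 3, ∃ C : ℝ, ∀ᶠ T : ℕ in Filter.atTop,
          (∫ ω, (∑ t ∈ Finset.Icc 1 T,
              (rew S (Sum.inr p) ((Mo (Sum.inr p)).toFun (Sum.inr p)) t ω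
                - rew S (Sum.inr p) ((Mt t ω).toFun (Sum.inr p)) t ω)) ∂S.P)
            ≤ C * Real.log (T : ℝ)) ∧
        (∃ u : Fin 3, ∃ c : ℝ, 0 < c ∧ ∀ᶠ T : ℕ in Filter.atTop,
          c * (T : ℝ) ≤ ∫ ω, (∑ t ∈ Finset.Icc 1 T,
              (rew S (Sum.inl u) ((Mo (Sum.inl u)).toFun (Sum.inl u)) t ω
                - rew S (Sum.inl u) ((Mt t ω).toFun (Sum.inl u)) t ω)) ∂S.P) := by
  refine ⟨SU, Mtf, tieFree_μEx, ?_, exPrefs, ?_, ?_, ?_⟩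
  · rintro (i | j) (bi | bj) h
    · exact h.elim
    · exact uVal_pos i bj
    · exact pVal_pos j bi
    · exact h.elim
  · intro t a b
    by_cases h : (sched t).toFun a = b
    · have he : {ω : SU.Ω | (Mtf t ω).toFun a = b} = Set.univ := by
        ext ω; simp [Mtf, h]
      rw [he]; exact MeasurableSet.univ
    · have he : {ω : SU.Ω | (Mtf t ω).toFun a = b} = ∅ := by
        ext ω; simp [Mtf, h]
      rw [he]; exact MeasurableSet.empty
  · intro t ht ω
    exact stable_all t ht
  · intro Mo hMo
    constructor
    · intro p
      obtain ⟨i, hi⟩ := (Mo (Sum.inr p)).provider_matched p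
      refine ⟨3 * Gv, ?_⟩
      rw [Filter.eventually_atTop]
      refine ⟨1, fun T hT => ?_⟩
      have hint : (∫ ω, (∑ t ∈ Finset.Icc 1 T,
          (rew SU (Sum.inr p) ((Mo (Sum.inr p)).toFun (Sum.inr p)) t ω
            - rew SU (Sum.inr p) ((Mtf t ω).toFun (Sum.inr p)) t ω)) ∂SU.P)
          = ∑ t ∈ Finset.Icc 1 T,
              (pVal p i - μEx (Sum.inr p) ((sched t).toFun (Sum.inr p))) := by
        rw [SUint]
        refine Finset.sum_congr rfl fun t _ => ?_
        erw [rew_eq, rew_eq, hi]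
        rfl
      rw [hint]
      exact provider_regret p (pVal p i) (mo_provider_bound (hMo (Sum.inr p)).1 p hi)
        (pVal_le p i) T hT
    · refine ⟨1, Gv / 2, by linarith [Gv_pos], ?_⟩
      rw [Filter.eventually_atTop]
      refine ⟨1, fun T _ => ?_⟩
      have hint : (∫ ω, (∑ t ∈ Finset.Icc 1 T,
          (rew SU (Sum.inl 1) ((Mo (Sum.inl 1)).toFun (Sum.inl 1)) t ω
            - rew SU (Sum.inl 1) ((Mtf t ω).toFun (Sum.inl 1)) t ω)) ∂SU.P)
          = ∑ t ∈ Finset.Icc 1 T,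
              (μEx (Sum.inl 1) ((Mo (Sum.inl 1)).toFun (Sum.inl 1))
                - μEx (Sum.inl 1) ((sched t).toFun (Sum.inl 1))) := by
        rw [SUint]
        refine Finset.sum_congr rfl fun t _ => ?_
        erw [rew_eq, rew_eq]
        rfl
      rw [hint]
      apply user_regret
      have h1 := (hMo (Sum.inl 1)).2 MU MU_stable
      have h2 : μEx (Sum.inl 1) (MU.toFun (Sum.inl 1)) = 1 + 2*Gv := by
        show uVal 1 2 = 1 + 2*Gv
        simp only [uVal, Matrix.cons_val_zero, Matrix.cons_val_one, Matrix.cons_val_two, Matrix.head_cons,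
          Matrix.tail_cons, Fin.isValue]
      have h1' : μEx (Sum.inl 1) (MU.toFun (Sum.inl 1))
          ≤ μEx (Sum.inl 1) ((Mo (Sum.inl 1)).toFun (Sum.inl 1)) := h1
      rw [h2] at h1'
      exact h1'


end MatchingBandits
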